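/- Let (d_n) be a sequence of primes. Then the set of x ∈ (0,1] with a_n'(x) = d_n for infinitely many n has Lebesgue measure 1 if ∑_{n≥1} 1/d_n² = ∞, and Lebesgue measure 0 otherwise. -/

import Mathlib

open MeasureTheory Filter Asymptotics Real Topology

/-- The Gauss measure on `(0,1]`, with density `1/(log 2 · (1+x))` w.r.t. Lebesgue measure. -/
noncomputable def gaussMeasure : Measure ℝ :=
  (volume.restrict (Set.Ioc (0:ℝ) 1)).withDensity
    (fun x => ENNReal.ofReal (1 / (Real.log 2 * (1 + x))))

/-- The first continued fraction digit `a(x) = ⌊1/x⌋`. -/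
noncomputable def cfDigit (x : ℝ) : ℕ := ⌊x⁻¹⌋₊

/-- The Gauss map `Sx = 1/x - ⌊1/x⌋`. -/
noncomputable def gaussMap (x : ℝ) : ℝ := Int.fract x⁻¹

/-- The prime digit function `a'(x)`: the first CF digit if it is prime, else `0`. -/
noncomputable def primeDigitVal (x : ℝ) : ℕ :=
  if (cfDigit x).Prime then cfDigit x else 0

/-!
Work with the Gauss measure `μ`, which is equivalent to Lebesgue measure on `(0,1]`, and use its
invariance under the Gauss map `S`. The pushforward under `S` of a density `G` on `(0,1]` is the
density `𝓛 G (t) = ∑ₖ G(1/(k+1+t)) / (k+1+t)²`, summed over the inverse branches of `S`, and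
the Gauss density `1/(log 2 (1+t))` is a fixed point of `𝓛` because the sum telescopes.

If the digit `p` is forbidden at some step, the branch `k = p - 1` drops out of the sum, and a
density bounded by `c` times the Gauss density is then bounded by `(1 - 1/(6p²)) c` times it.
Iterating along the orbit, the points whose digits avoid `dₙ` for `m ≤ n < m + N` have Gauss
measure at most `∏ (1 - 1/(6 dₙ²))`, which tends to `0` as `N → ∞` when `∑ 1/dₙ² = ∞`.
When `∑ 1/dₙ² < ∞`, invariance gives `μ(S⁻ⁿ Iₙ) = μ(Iₙ) ≤ 1/(log 2 · dₙ²)` for the interval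
`Iₙ` of points with first digit `dₙ`, and Borel–Cantelli applies.
-/

open Set
open scoped ENNReal

lemma measurable_gaussMap : Measurable gaussMap :=
  measurable_fract.comp measurable_inv

lemma measurable_cfDigit : Measurable cfDigit :=
  Nat.measurable_floor.comp measurable_inv

lemma gaussMap_mem_Ico (x : ℝ) : gaussMap x ∈ Ico (0 : ℝ) 1 :=
  ⟨Int.fract_nonneg _, Int.fract_lt_one _⟩

noncomputable def gaussBranch (k : ℕ) (t : ℝ) : ℝ := ((k : ℝ) + 1 + t)⁻¹

lemma gaussBranch_injective (k : ℕ) : Function.Injective (gaussBranch k) :=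
  inv_injective.comp (add_right_injective _)

lemma measurable_gaussBranch (k : ℕ) : Measurable (gaussBranch k) :=
  (measurable_const.add measurable_id).inv

lemma continuousOn_gaussBranch (k : ℕ) : ContinuousOn (gaussBranch k) (Ici 0) :=
  (continuousOn_const.add continuousOn_id).inv₀ fun t ht => by
    simp only [Pi.add_apply, id]
    linarith [mem_Ici.mp ht, k.cast_nonneg (α := ℝ)]

lemma hasDerivAt_gaussBranch (k : ℕ) {t : ℝ} (ht : 0 ≤ t) :
    HasDerivAt (gaussBranch k) (-(((k : ℝ) + 1 + t) ^ 2)⁻¹) t := by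
  have := ((hasDerivAt_id t).const_add ((k : ℝ) + 1)).inv (by simp only [id]; positivity)
  rwa [neg_div, one_div] at this

lemma gaussBranch_mem_Ioc (k : ℕ) {t : ℝ} (ht : 0 ≤ t) : gaussBranch k t ∈ Ioc (0 : ℝ) 1 :=
  ⟨by unfold gaussBranch; positivity,
    inv_le_one_of_one_le₀ (by linarith [k.cast_nonneg (α := ℝ)])⟩

lemma gaussBranch_mem_Ioo (k : ℕ) {t : ℝ} (ht : 0 < t) : gaussBranch k t ∈ Ioo (0 : ℝ) 1 :=
  ⟨by unfold gaussBranch; positivity,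
    inv_lt_one_of_one_lt₀ (by linarith [k.cast_nonneg (α := ℝ)])⟩

lemma cfDigit_gaussBranch (k : ℕ) {t : ℝ} (ht : t ∈ Ico (0 : ℝ) 1) :
    cfDigit (gaussBranch k t) = k + 1 := by
  rw [cfDigit, gaussBranch, inv_inv,
    Nat.floor_eq_iff (by linarith [ht.1, k.cast_nonneg (α := ℝ)])]
  push_cast
  constructor <;> linarith [ht.1, ht.2]

lemma gaussMap_gaussBranch (k : ℕ) {t : ℝ} (ht : t ∈ Ico (0 : ℝ) 1) :
    gaussMap (gaussBranch k t) = t := by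
  rw [gaussMap, gaussBranch, inv_inv,
    show (k : ℝ) + 1 + t = ((k + 1 : ℕ) : ℝ) + t by push_cast; ring,
    Int.fract_natCast_add, Int.fract_eq_self.mpr ht]

lemma gaussBranch_cfDigit_sub_one {x : ℝ} (hx : x ∈ Ioc (0 : ℝ) 1) :
    gaussBranch (cfDigit x - 1) (gaussMap x) = x := by
  have hinv : 1 ≤ x⁻¹ := one_le_inv_iff₀.mpr hx
  have hdigit : 1 ≤ cfDigit x := Nat.le_floor (by exact_mod_cast hinv)
  rw [gaussBranch, Nat.cast_sub hdigit, Nat.cast_one, sub_add_cancel, cfDigit, gaussMap,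
    natCast_floor_eq_intCast_floor (by linarith), Int.floor_add_fract, inv_inv]

lemma Ioc_inter_preimage_gaussMap {B : Set ℝ} (hB : B ⊆ Ico 0 1) :
    Ioc 0 1 ∩ gaussMap ⁻¹' B = ⋃ k, gaussBranch k '' B := by
  ext x
  simp only [mem_inter_iff, mem_preimage, mem_iUnion, mem_image]
  constructor
  · rintro ⟨hx, hxB⟩
    exact ⟨cfDigit x - 1, gaussMap x, hxB, gaussBranch_cfDigit_sub_one hx⟩
  · rintro ⟨k, t, ht, rfl⟩
    exact ⟨gaussBranch_mem_Ioc k (hB ht).1, by rwa [gaussMap_gaussBranch k (hB ht)]⟩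

lemma pairwise_disjoint_image_gaussBranch {B : Set ℝ} (hB : B ⊆ Ico 0 1) :
    Pairwise (Function.onFun Disjoint fun k => gaussBranch k '' B) := by
  intro k l hkl
  refine disjoint_left.mpr ?_
  rintro _ ⟨s, hs, rfl⟩ ⟨u, hu, heq⟩
  have := congrArg cfDigit heq
  rw [cfDigit_gaussBranch k (hB hs), cfDigit_gaussBranch l (hB hu)] at this
  omega

lemma lintegral_image_gaussBranch (k : ℕ) {B : Set ℝ} (hB : MeasurableSet B) (hB0 : B ⊆ Ici 0)
    (G : ℝ → ℝ≥0∞) :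
    ∫⁻ x in gaussBranch k '' B, G x
      = ∫⁻ t in B, ENNReal.ofReal (((k : ℝ) + 1 + t) ^ 2)⁻¹ * G (gaussBranch k t) := by
  rw [lintegral_image_eq_lintegral_abs_deriv_mul hB
    (fun t ht => (hasDerivAt_gaussBranch k (hB0 ht)).hasDerivWithinAt)
    (gaussBranch_injective k).injOn]
  refine setLIntegral_congr_fun hB fun t _ => ?_
  rw [abs_neg, abs_of_nonneg (by positivity)]

/-- The Perron–Frobenius operator of `gaussMap` with respect to Lebesgue measure. -/
noncomputable def gaussTransfer (F : ℝ → ℝ≥0∞) (t : ℝ) : ℝ≥0∞ :=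
  ∑' k : ℕ, ENNReal.ofReal (((k : ℝ) + 1 + t) ^ 2)⁻¹ * F (gaussBranch k t)

lemma Measurable.gaussTransfer_summand {F : ℝ → ℝ≥0∞} (hF : Measurable F) (k : ℕ) :
    Measurable fun t => ENNReal.ofReal (((k : ℝ) + 1 + t) ^ 2)⁻¹ * F (gaussBranch k t) :=
  ((measurable_const.add measurable_id).pow_const 2).inv.ennreal_ofReal.mul
    (hF.comp (measurable_gaussBranch k))

lemma Measurable.gaussTransfer {F : ℝ → ℝ≥0∞} (hF : Measurable F) :
    Measurable (gaussTransfer F) :=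
  Measurable.tsum hF.gaussTransfer_summand

lemma setLIntegral_Ioc_inter_preimage_gaussMap {G : ℝ → ℝ≥0∞} (hG : Measurable G)
    {B : Set ℝ} (hB : MeasurableSet B) (hB1 : B ⊆ Ico 0 1) :
    ∫⁻ x in Ioc 0 1 ∩ gaussMap ⁻¹' B, G x = ∫⁻ t in B, gaussTransfer G t := by
  have hB0 : B ⊆ Ici 0 := fun t ht => (hB1 ht).1
  have hmeas (k : ℕ) : MeasurableSet (gaussBranch k '' B) :=
    hB.image_of_continuousOn_injOn ((continuousOn_gaussBranch k).mono hB0)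
      (gaussBranch_injective k).injOn
  rw [Ioc_inter_preimage_gaussMap hB1,
    lintegral_iUnion hmeas (pairwise_disjoint_image_gaussBranch hB1)]
  simp only [lintegral_image_gaussBranch _ hB hB0, gaussTransfer]
  exact (lintegral_tsum fun k => (hG.gaussTransfer_summand k).aemeasurable).symm

lemma map_gaussMap_withDensity {G : ℝ → ℝ≥0∞} (hG : Measurable G) :
    ((volume.restrict (Ioc (0 : ℝ) 1)).withDensity G).map gaussMap
      = (volume.restrict (Ioc (0 : ℝ) 1)).withDensity (gaussTransfer G) := by
  ext B hB
  have hpre : gaussMap ⁻¹' B = gaussMap ⁻¹' (B ∩ Ico 0 1) := by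
    ext x; simp [gaussMap_mem_Ico x]
  rw [Measure.map_apply measurable_gaussMap hB, withDensity_apply _ (measurable_gaussMap hB),
    withDensity_apply _ hB, Measure.restrict_restrict (measurable_gaussMap hB),
    Measure.restrict_restrict hB, hpre, inter_comm,
    setLIntegral_Ioc_inter_preimage_gaussMap hG (hB.inter measurableSet_Ico) inter_subset_right]
  exact setLIntegral_congr ((ae_eq_refl B).inter Ico_ae_eq_Ioc)

noncomputable def cylinderDensity (D : ℕ → Set ℝ) (G : ℝ → ℝ≥0∞) : ℕ → ℝ → ℝ≥0∞
  | 0 => G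
  | N + 1 => gaussTransfer ((D N).indicator (cylinderDensity D G N))

section Cylinder

variable {D : ℕ → Set ℝ} {G : ℝ → ℝ≥0∞}

lemma measurable_cylinderDensity (hD : ∀ j, MeasurableSet (D j)) (hG : Measurable G) (N : ℕ) :
    Measurable (cylinderDensity D G N) := by
  induction N with
  | zero => exact hG
  | succ N ih => exact (ih.indicator (hD N)).gaussTransfer

lemma map_iterate_restrict_cylinder (hD : ∀ j, MeasurableSet (D j)) (hG : Measurable G)
    (N : ℕ) :
    (((volume.restrict (Ioc (0 : ℝ) 1)).withDensity G).restrict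
        (⋂ j < N, gaussMap^[j] ⁻¹' D j)).map gaussMap^[N]
      = (volume.restrict (Ioc (0 : ℝ) 1)).withDensity (cylinderDensity D G N) := by
  induction N with
  | zero => simp [cylinderDensity]
  | succ N ih =>
    rw [biInter_lt_succ, inter_comm,
      ← Measure.restrict_restrict (measurable_gaussMap.iterate N (hD N)),
      Function.iterate_succ', ← Measure.map_map measurable_gaussMap (measurable_gaussMap.iterate N),
      ← Measure.restrict_map (measurable_gaussMap.iterate N) (hD N), ih,
      restrict_withDensity (hD N), ← withDensity_indicator (hD N),
      map_gaussMap_withDensity ((measurable_cylinderDensity hD hG N).indicator (hD N))]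
    rfl

end Cylinder

lemma hasSum_sub_succ_of_antitone {f : ℕ → ℝ} (hf : Antitone f)
    (hf0 : Tendsto f atTop (𝓝 0)) : HasSum (fun n => f n - f (n + 1)) (f 0) := by
  rw [hasSum_iff_tendsto_nat_of_nonneg fun n => sub_nonneg.mpr (hf n.le_succ)]
  simp_rw [Finset.sum_range_sub']
  simpa using (tendsto_const_nhds (x := f 0)).sub hf0

noncomputable def gaussDensity (x : ℝ) : ℝ≥0∞ := ENNReal.ofReal (1 / (Real.log 2 * (1 + x)))

lemma gaussMeasure_eq_withDensity :
    gaussMeasure = (volume.restrict (Ioc (0 : ℝ) 1)).withDensity gaussDensity := rfl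

lemma measurable_gaussDensity : Measurable gaussDensity :=
  (measurable_const.div (measurable_const.mul (measurable_const.add measurable_id))).ennreal_ofReal

lemma antitone_one_div_log_two_mul {t : ℝ} (ht : 0 ≤ t) :
    Antitone fun k : ℕ => 1 / (Real.log 2 * ((k : ℝ) + 1 + t)) := by
  have hlog := Real.log_pos one_lt_two
  intro a b hab
  dsimp only
  gcongr

/-- The `k`-th summand of `gaussTransfer gaussDensity t`; the summands telescope, which is why the
Gauss measure is invariant. -/
noncomputable def gaussSummand (t : ℝ) (k : ℕ) : ℝ :=
  1 / (Real.log 2 * ((k : ℝ) + 1 + t)) - 1 / (Real.log 2 * (((k + 1 : ℕ) : ℝ) + 1 + t))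

lemma gaussSummand_nonneg {t : ℝ} (ht : 0 ≤ t) (k : ℕ) : 0 ≤ gaussSummand t k :=
  sub_nonneg.mpr (antitone_one_div_log_two_mul ht k.le_succ)

lemma hasSum_gaussSummand {t : ℝ} (ht : 0 ≤ t) :
    HasSum (gaussSummand t) (1 / (Real.log 2 * (1 + t))) := by
  have hlog := Real.log_pos one_lt_two
  convert hasSum_sub_succ_of_antitone (antitone_one_div_log_two_mul ht)
    (tendsto_const_nhds.div_atTop (Tendsto.const_mul_atTop hlog (tendsto_atTop_add_const_right _ _
      (tendsto_atTop_add_const_right _ _ tendsto_natCast_atTop_atTop)))) using 1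
  · rfl
  · simp

lemma ofReal_mul_gaussDensity_gaussBranch (k : ℕ) {t : ℝ} (ht : 0 ≤ t) :
    ENNReal.ofReal (((k : ℝ) + 1 + t) ^ 2)⁻¹ * gaussDensity (gaussBranch k t)
      = ENNReal.ofReal (gaussSummand t k) := by
  have hlog := Real.log_pos one_lt_two
  have hk : (0 : ℝ) < k + 1 + t := by positivity
  rw [gaussDensity, gaussBranch, ← ENNReal.ofReal_mul (by positivity), gaussSummand]
  congr 1
  push_cast
  field_simp
  ring

lemma gaussTransfer_gaussDensity {t : ℝ} (ht : 0 ≤ t) :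
    gaussTransfer gaussDensity t = gaussDensity t := by
  simp only [gaussTransfer, ofReal_mul_gaussDensity_gaussBranch _ ht]
  rw [← ENNReal.ofReal_tsum_of_nonneg (gaussSummand_nonneg ht) (hasSum_gaussSummand ht).summable,
    (hasSum_gaussSummand ht).tsum_eq, gaussDensity]

lemma measurePreserving_gaussMap : MeasurePreserving gaussMap gaussMeasure gaussMeasure := by
  refine ⟨measurable_gaussMap, ?_⟩
  rw [gaussMeasure_eq_withDensity, map_gaussMap_withDensity measurable_gaussDensity]
  refine withDensity_congr_ae ?_
  filter_upwards [ae_restrict_mem measurableSet_Ioc] with t ht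
  exact gaussTransfer_gaussDensity ht.1.le

noncomputable def digitAvoidanceFactor (p : ℕ) : ℝ := 1 - 1 / (6 * (p : ℝ) ^ 2)

lemma digitAvoidanceFactor_nonneg {p : ℕ} (hp : 0 < p) : 0 ≤ digitAvoidanceFactor p := by
  have : (1 : ℝ) ≤ p := by exact_mod_cast hp
  exact sub_nonneg.mpr (div_le_one_of_le₀ (by nlinarith) (by positivity))

lemma sub_gaussSummand_le (k : ℕ) {t : ℝ} (ht : t ∈ Ioo (0 : ℝ) 1) :
    1 / (Real.log 2 * (1 + t)) - gaussSummand t k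
      ≤ digitAvoidanceFactor (k + 1) * (1 / (Real.log 2 * (1 + t))) := by
  have hlog := Real.log_pos one_lt_two
  obtain ⟨ht0, ht1⟩ := ht
  have hk : (0 : ℝ) ≤ k := k.cast_nonneg
  have hsummand : gaussSummand t k
      = 1 / (Real.log 2 * (((k : ℝ) + 1 + t) * ((k : ℝ) + 2 + t))) := by
    rw [gaussSummand]; push_cast; field_simp; ring
  have hfactor : digitAvoidanceFactor (k + 1) * (1 / (Real.log 2 * (1 + t)))
      = 1 / (Real.log 2 * (1 + t)) - 1 / (Real.log 2 * (6 * ((k : ℝ) + 1) ^ 2 * (1 + t))) := by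
    rw [digitAvoidanceFactor]; push_cast; field_simp
  rw [hsummand, hfactor, sub_le_sub_iff_left, one_div_le_one_div (by positivity) (by positivity)]
  refine mul_le_mul_of_nonneg_left ?_ hlog.le
  nlinarith

/-- The branch `k = p - 1` lands in `cfDigit ⁻¹' {p}`, so its summand is missing; by
`sub_gaussSummand_le` it carries at least `1/(6p²)` of the total. -/
lemma gaussTransfer_indicator_le {F : ℝ → ℝ≥0∞} {c : ℝ≥0∞} {p : ℕ} (hp : 0 < p) {D : Set ℝ}
    (hD : ∀ x ∈ D, cfDigit x ≠ p) (hF : ∀ x ∈ Ioo (0 : ℝ) 1, F x ≤ c * gaussDensity x)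
    {t : ℝ} (ht : t ∈ Ioo (0 : ℝ) 1) :
    gaussTransfer (D.indicator F) t
      ≤ c * ENNReal.ofReal (digitAvoidanceFactor p) * gaussDensity t := by
  obtain ⟨k₀, rfl⟩ := Nat.exists_eq_add_one_of_ne_zero hp.ne'
  set a : ℕ → ℝ := fun k => if k = k₀ then 0 else gaussSummand t k
  have ha (k : ℕ) : 0 ≤ a k := by
    simp only [a]; split_ifs
    exacts [le_rfl, gaussSummand_nonneg ht.1.le k]
  have hterm (k : ℕ) : ENNReal.ofReal (((k : ℝ) + 1 + t) ^ 2)⁻¹ * D.indicator F (gaussBranch k t)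
      ≤ c * ENNReal.ofReal (a k) := by
    simp only [a]
    split_ifs with hk
    · subst hk
      have : gaussBranch k t ∉ D := fun h =>
        hD _ h (cfDigit_gaussBranch k (Ioo_subset_Ico_self ht))
      simp [this]
    · calc ENNReal.ofReal (((k : ℝ) + 1 + t) ^ 2)⁻¹ * D.indicator F (gaussBranch k t)
          ≤ ENNReal.ofReal (((k : ℝ) + 1 + t) ^ 2)⁻¹ * (c * gaussDensity (gaussBranch k t)) := by
            gcongr
            exact (indicator_le_self _ _ _).trans (hF _ (gaussBranch_mem_Ioo k ht.1))
        _ = c * ENNReal.ofReal (gaussSummand t k) := by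
            rw [mul_left_comm, ofReal_mul_gaussDensity_gaussBranch k ht.1.le]
  have hdrop : HasSum a (1 / (Real.log 2 * (1 + t)) - gaussSummand t k₀) :=
    hasSum_ite_sub_hasSum (hasSum_gaussSummand ht.1.le) k₀
  calc gaussTransfer (D.indicator F) t
      ≤ ∑' k, c * ENNReal.ofReal (a k) := ENNReal.tsum_le_tsum hterm
    _ = c * ENNReal.ofReal (1 / (Real.log 2 * (1 + t)) - gaussSummand t k₀) := by
      rw [ENNReal.tsum_mul_left, ← ENNReal.ofReal_tsum_of_nonneg ha hdrop.summable,
        hdrop.tsum_eq]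
    _ ≤ c * ENNReal.ofReal (digitAvoidanceFactor (k₀ + 1) * (1 / (Real.log 2 * (1 + t)))) := by
      gcongr
      exact sub_gaussSummand_le k₀ ht
    _ = _ := by
      rw [mul_assoc, ENNReal.ofReal_mul (digitAvoidanceFactor_nonneg hp), gaussDensity]

lemma cylinderDensity_gaussDensity_le {D : ℕ → Set ℝ} {p : ℕ → ℕ} (hp : ∀ j, 0 < p j)
    (hDp : ∀ j, ∀ x ∈ D j, cfDigit x ≠ p j) (N : ℕ) {t : ℝ} (ht : t ∈ Ioo (0 : ℝ) 1) :
    cylinderDensity D gaussDensity N t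
      ≤ (∏ j ∈ Finset.range N, ENNReal.ofReal (digitAvoidanceFactor (p j))) * gaussDensity t := by
  induction N generalizing t with
  | zero => simp [cylinderDensity]
  | succ N ih =>
    rw [Finset.prod_range_succ]
    exact gaussTransfer_indicator_le (hp N) (hDp N) (fun x hx => ih hx) ht

lemma ae_restrict_Ioc_mem_Ioo : ∀ᵐ t ∂(volume.restrict (Ioc (0 : ℝ) 1)), t ∈ Ioo (0 : ℝ) 1 := by
  rw [← Measure.restrict_congr_set Ioo_ae_eq_Ioc]
  exact ae_restrict_mem measurableSet_Ioo

lemma gaussMeasure_cylinder_le {D : ℕ → Set ℝ} (hD : ∀ j, MeasurableSet (D j)) {p : ℕ → ℕ}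
    (hp : ∀ j, 0 < p j) (hDp : ∀ j, ∀ x ∈ D j, cfDigit x ≠ p j) (N : ℕ) :
    gaussMeasure (⋂ j < N, gaussMap^[j] ⁻¹' D j)
      ≤ (∏ j ∈ Finset.range N, ENNReal.ofReal (digitAvoidanceFactor (p j)))
          * gaussMeasure univ := by
  have hmap := map_iterate_restrict_cylinder hD measurable_gaussDensity N
  rw [← gaussMeasure_eq_withDensity] at hmap
  calc gaussMeasure (⋂ j < N, gaussMap^[j] ⁻¹' D j)
      = ((gaussMeasure.restrict (⋂ j < N, gaussMap^[j] ⁻¹' D j)).map gaussMap^[N]) univ := by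
        rw [Measure.map_apply (measurable_gaussMap.iterate N) MeasurableSet.univ, preimage_univ,
          Measure.restrict_apply_univ]
    _ = ∫⁻ t in Ioc (0 : ℝ) 1, cylinderDensity D gaussDensity N t := by
        rw [hmap, withDensity_apply _ MeasurableSet.univ, Measure.restrict_univ]
    _ ≤ ∫⁻ t in Ioc (0 : ℝ) 1,
          (∏ j ∈ Finset.range N, ENNReal.ofReal (digitAvoidanceFactor (p j))) * gaussDensity t :=
        lintegral_mono_ae (ae_restrict_Ioc_mem_Ioo.mono fun t ht =>
          cylinderDensity_gaussDensity_le hp hDp N ht)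
    _ = _ := by
        rw [lintegral_const_mul _ measurable_gaussDensity, gaussMeasure_eq_withDensity,
          withDensity_apply _ MeasurableSet.univ, Measure.restrict_univ]

lemma tendsto_prod_one_sub_of_not_summable {ε : ℕ → ℝ} (h0 : ∀ n, 0 ≤ ε n) (h1 : ∀ n, ε n ≤ 1)
    (h : ¬ Summable ε) : Tendsto (fun N => ∏ j ∈ Finset.range N, (1 - ε j)) atTop (𝓝 0) := by
  have hexp : Tendsto (fun N => Real.exp (-∑ j ∈ Finset.range N, ε j)) atTop (𝓝 0) :=
    Real.tendsto_exp_atBot.comp (tendsto_neg_atTop_atBot.comp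
      ((not_summable_iff_tendsto_nat_atTop_of_nonneg h0).mp h))
  refine squeeze_zero (fun N => Finset.prod_nonneg fun j _ => sub_nonneg.mpr (h1 j))
    (fun N => ?_) hexp
  rw [← Finset.sum_neg_distrib, Real.exp_sum]
  exact Finset.prod_le_prod (fun j _ => sub_nonneg.mpr (h1 j))
    fun j _ => by linarith [Real.add_one_le_exp (-ε j)]

lemma gaussDensity_le {x : ℝ} (hx : 0 ≤ x) : gaussDensity x ≤ ENNReal.ofReal (Real.log 2)⁻¹ := by
  have hlog := Real.log_pos one_lt_two
  refine ENNReal.ofReal_le_ofReal ?_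
  rw [one_div, mul_inv]
  exact mul_le_of_le_one_right (by positivity) (inv_le_one_of_one_le₀ (by linarith))

lemma gaussMeasure_le_smul :
    gaussMeasure ≤ ENNReal.ofReal (Real.log 2)⁻¹ • volume.restrict (Ioc (0 : ℝ) 1) := by
  rw [gaussMeasure_eq_withDensity, ← withDensity_const]
  refine withDensity_mono ?_
  filter_upwards [ae_restrict_mem measurableSet_Ioc] with x hx
  exact gaussDensity_le hx.1.le

instance : IsFiniteMeasure gaussMeasure where
  measure_univ_lt_top := (gaussMeasure_le_smul univ).trans_lt (by simp)

lemma absolutelyContinuous_gaussMeasure : volume.restrict (Ioc (0 : ℝ) 1) ≪ gaussMeasure := by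
  refine withDensity_absolutelyContinuous' measurable_gaussDensity.aemeasurable ?_
  filter_upwards [ae_restrict_mem measurableSet_Ioc] with x hx
  have hlog := Real.log_pos one_lt_two
  exact (ENNReal.ofReal_pos.mpr (by have := hx.1; positivity)).ne'

lemma cfDigit_preimage_singleton_subset {p : ℕ} (hp : 0 < p) :
    cfDigit ⁻¹' {p} ⊆ Ioc ((p : ℝ) + 1)⁻¹ (p : ℝ)⁻¹ := by
  intro x hx
  have hp' : (0 : ℝ) < p := by exact_mod_cast hp
  have hfloor := (Nat.floor_eq_iff' hp.ne').mp (show ⌊x⁻¹⌋₊ = p from hx)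
  have hx0 : 0 < x := inv_pos.mp (hp'.trans_le hfloor.1)
  exact ⟨(inv_lt_comm₀ hx0 (by positivity)).mp hfloor.2, (le_inv_comm₀ hx0 hp').mpr hfloor.1⟩

lemma volume_cfDigit_preimage_singleton_le {p : ℕ} (hp : 0 < p) :
    volume (cfDigit ⁻¹' {p}) ≤ ENNReal.ofReal (1 / (p : ℝ) ^ 2) := by
  have hp' : (0 : ℝ) < p := by exact_mod_cast hp
  refine (measure_mono (cfDigit_preimage_singleton_subset hp)).trans ?_
  rw [Real.volume_Ioc]
  refine ENNReal.ofReal_le_ofReal ?_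
  rw [inv_sub_inv hp'.ne' (by positivity), add_sub_cancel_left,
    one_div_le_one_div (by positivity) (by positivity)]
  nlinarith

lemma ae_eventually_cfDigit_iterate_ne {p : ℕ → ℕ} (hp : ∀ n, 0 < p n)
    (hsum : Summable fun n => 1 / (p n : ℝ) ^ 2) :
    ∀ᵐ x ∂gaussMeasure, ∀ᶠ n in atTop, cfDigit (gaussMap^[n] x) ≠ p n := by
  have hpre (n : ℕ) : gaussMeasure (gaussMap^[n] ⁻¹' (cfDigit ⁻¹' {p n}))
      ≤ ENNReal.ofReal (Real.log 2)⁻¹ * ENNReal.ofReal (1 / (p n : ℝ) ^ 2) := by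
    rw [(measurePreserving_gaussMap.iterate n).measure_preimage
      (measurable_cfDigit (measurableSet_singleton _)).nullMeasurableSet]
    refine (gaussMeasure_le_smul _).trans ?_
    rw [Measure.smul_apply, smul_eq_mul]
    gcongr
    exact (Measure.restrict_le_self _).trans (volume_cfDigit_preimage_singleton_le (hp n))
  refine ae_eventually_notMem (ne_top_of_le_ne_top ?_ (ENNReal.tsum_le_tsum hpre))
  rw [ENNReal.tsum_mul_left, ← ENNReal.ofReal_tsum_of_nonneg (fun n => by positivity) hsum]
  exact ENNReal.mul_ne_top ENNReal.ofReal_ne_top ENNReal.ofReal_ne_top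

lemma ae_frequently_cfDigit_iterate_eq {p : ℕ → ℕ} (hp : ∀ n, 0 < p n)
    (hdiv : ¬ Summable fun n => 1 / (p n : ℝ) ^ 2) :
    ∀ᵐ x ∂gaussMeasure, ∃ᶠ n in atTop, cfDigit (gaussMap^[n] x) = p n := by
  simp only [frequently_atTop]
  refine ae_all_iff.mpr fun m => ?_
  set D : ℕ → Set ℝ := fun j => (cfDigit ⁻¹' {p (j + m)})ᶜ
  set c : ℕ → ℝ≥0∞ := fun N =>
    ∏ j ∈ Finset.range N, ENNReal.ofReal (digitAvoidanceFactor (p (j + m)))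
  have hbound (N : ℕ) :
      gaussMeasure {x | ∀ n ≥ m, cfDigit (gaussMap^[n] x) ≠ p n} ≤ c N * gaussMeasure univ := by
    have hD (j : ℕ) : MeasurableSet (D j) :=
      (measurable_cfDigit (measurableSet_singleton _)).compl
    have hsub : {x | ∀ n ≥ m, cfDigit (gaussMap^[n] x) ≠ p n}
        ⊆ gaussMap^[m] ⁻¹' ⋂ j < N, gaussMap^[j] ⁻¹' D j := by
      intro x hx
      simp only [mem_preimage, mem_iInter, ← Function.iterate_add_apply]
      exact fun j _ => hx (j + m) (by omega)
    refine (measure_mono hsub).trans ?_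
    rw [(measurePreserving_gaussMap.iterate m).measure_preimage
      (MeasurableSet.iInter fun j => MeasurableSet.iInter fun _ =>
        measurable_gaussMap.iterate j (hD j)).nullMeasurableSet]
    exact gaussMeasure_cylinder_le hD (fun j => hp (j + m)) (fun j x hx => hx) N
  have hdiv' : ¬ Summable fun j => 1 / (6 * (p (j + m) : ℝ) ^ 2) := fun h =>
    hdiv ((summable_nat_add_iff m).mp ((h.mul_left 6).congr fun j => by
      have := hp (j + m); field_simp))
  have hc : Tendsto c atTop (𝓝 0) := by
    have := ENNReal.tendsto_ofReal (tendsto_prod_one_sub_of_not_summable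
      (fun j => by positivity)
      (fun j => sub_nonneg.mp (digitAvoidanceFactor_nonneg (hp (j + m)))) hdiv')
    rw [ENNReal.ofReal_zero] at this
    exact this.congr fun N =>
      ENNReal.ofReal_prod_of_nonneg fun j _ => digitAvoidanceFactor_nonneg (hp _)
  have hlim : Tendsto (fun N => c N * gaussMeasure univ) atTop (𝓝 0) := by
    simpa using ENNReal.Tendsto.mul_const hc (Or.inr (measure_ne_top _ _))
  rw [ae_iff]
  simp only [not_exists, not_and]
  exact le_antisymm (ge_of_tendsto' hlim hbound) bot_le

lemma primeDigitVal_eq_iff {p : ℕ} (hp : p.Prime) {x : ℝ} :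
    primeDigitVal x = p ↔ cfDigit x = p := by
  unfold primeDigitVal
  split_ifs with h
  · rfl
  · exact ⟨fun h0 => absurd h0.symm hp.ne_zero, fun hx => absurd (hx ▸ hp) h⟩

lemma volume_sep_Ioc_eq_restrict (P : ℝ → Prop) :
    volume {x ∈ Ioc (0 : ℝ) 1 | P x} = volume.restrict (Ioc (0 : ℝ) 1) {x | P x} := by
  rw [Measure.restrict_apply' measurableSet_Ioc, inter_comm]
  rfl

lemma volume_sep_Ioc_eq_one {P : ℝ → Prop} (h : ∀ᵐ x ∂gaussMeasure, P x) :
    volume {x ∈ Ioc (0 : ℝ) 1 | P x} = 1 := by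
  rw [volume_sep_Ioc_eq_restrict, measure_congr ((ae_eq_univ (s := {x | P x})).mpr
    (ae_iff.mp (absolutelyContinuous_gaussMeasure.ae_le h))), Measure.restrict_apply_univ]
  simp

lemma volume_sep_Ioc_eq_zero {P : ℝ → Prop} (h : ∀ᵐ x ∂gaussMeasure, ¬ P x) :
    volume {x ∈ Ioc (0 : ℝ) 1 | P x} = 0 := by
  rw [volume_sep_Ioc_eq_restrict]
  exact measure_eq_zero_iff_ae_notMem.mpr (absolutelyContinuous_gaussMeasure.ae_le h)

theorem stmt_18 (d : ℕ → ℕ) (hd : ∀ n, (d n).Prime) :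
    (¬ Summable (fun n : ℕ => 1 / (d n : ℝ)^2) →
      volume {x ∈ Set.Ioc (0:ℝ) 1 |
        ∃ᶠ n : ℕ in atTop, primeDigitVal (gaussMap^[n] x) = d n} = 1) ∧
    (Summable (fun n : ℕ => 1 / (d n : ℝ)^2) →
      volume {x ∈ Set.Ioc (0:ℝ) 1 |
        ∃ᶠ n : ℕ in atTop, primeDigitVal (gaussMap^[n] x) = d n} = 0) := by
  have hpos (n : ℕ) : 0 < d n := (hd n).pos
  simp only [primeDigitVal_eq_iff (hd _)]
  exact ⟨fun hdiv => volume_sep_Ioc_eq_one (ae_frequently_cfDigit_iterate_eq hpos hdiv),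
    fun hsum => volume_sep_Ioc_eq_zero
      ((ae_eventually_cfDigit_iterate_ne hpos hsum).mono fun _ hx => not_frequently.mpr hx)⟩
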